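/- arXiv:2112.01804 — 5 statements merged into one kernel-verified Lean document; each statement's English description precedes it below -/
import Mathlib

section
/- If E[Y²] < ∞, then E[(Y − f̄(X))²] = E[Y·(Y − Z)]; that is, the minimal mean squared distance between Y and Borel functions of X equals the expectation of Y(Y − Z). -/
/-!
Both sides equal `∫ Var(h(x, V)) dP_X(x)`. Independence of `X` and `V` makes
`E[Y | X] = g(X)` with `g x = E h(x, V)`, so the left side integrates the fibrewise variance of
`h(x, ·)` over the law of `X`. On the right, conditionally on `X = x` the pair `(V, Ṽ)` is an
i.i.d. pair, and for i.i.d. `V, Ṽ` one has `E[f(V)(f(V) - f(Ṽ))] = E f(V)² - (E f(V))² = Var f(V)`.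
-/
open MeasureTheory ProbabilityTheory

section Variance

variable {β : Type*} [MeasurableSpace β] {ρ : Measure β} [IsProbabilityMeasure ρ] {f : β → ℝ}

lemma integral_mul_sub_prod_eq_variance (hf : MemLp f 2 ρ) :
    ∫ p, f p.1 * (f p.1 - f p.2) ∂(ρ.prod ρ) = variance f ρ := by
  have hsq : Integrable (fun p : β × β => f p.1 ^ 2) (ρ.prod ρ) := hf.integrable_sq.comp_fst ρ
  have hmul : Integrable (fun p : β × β => f p.1 * f p.2) (ρ.prod ρ) :=
    (hf.integrable one_le_two).mul_prod (hf.integrable one_le_two)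
  simp_rw [mul_sub, ← sq]
  rw [integral_sub hsq hmul, integral_fun_fst (fun v => f v ^ 2), integral_prod_mul,
    variance_eq_sub hf]
  simp [sq]

lemma sq_integral_le_integral_sq (hf : MemLp f 2 ρ) : (∫ v, f v ∂ρ) ^ 2 ≤ ∫ v, f v ^ 2 ∂ρ := by
  have := variance_nonneg f ρ
  rw [variance_eq_sub hf] at this
  simpa [sub_nonneg] using this

end Variance

section Fiber

variable {α β : Type*} [MeasurableSpace α] [MeasurableSpace β] {ν : Measure α} [SFinite ν]
  {ρ : Measure β} {h : α × β → ℝ}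

lemma MeasureTheory.MemLp.ae_memLp_prodMk_left [SFinite ρ] (hh : MemLp h 2 (ν.prod ρ)) :
    ∀ᵐ x ∂ν, MemLp (fun v => h (x, v)) 2 ρ := by
  filter_upwards [hh.aestronglyMeasurable.prodMk_left, hh.integrable_sq.prod_right_ae]
    with x hm hx
  exact (memLp_two_iff_integrable_sq hm).2 hx

lemma MeasureTheory.MemLp.integral_prod_right [IsProbabilityMeasure ρ] (hh : MemLp h 2 (ν.prod ρ)) :
    MemLp (fun x => ∫ v, h (x, v) ∂ρ) 2 ν := by
  have hm := hh.aestronglyMeasurable.integral_prod_right'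
  refine (memLp_two_iff_integrable_sq hm).2 <|
    hh.integrable_sq.integral_prod_left.mono' (hm.pow 2) ?_
  filter_upwards [hh.ae_memLp_prodMk_left] with x hx
  rw [Real.norm_of_nonneg (sq_nonneg _)]
  exact sq_integral_le_integral_sq hx

lemma integral_sub_integral_prod_right_sq_eq_integral_variance [IsProbabilityMeasure ρ]
    (hh : MemLp h 2 (ν.prod ρ)) :
    ∫ p, (h p - ∫ v, h (p.1, v) ∂ρ) ^ 2 ∂(ν.prod ρ) = ∫ x, variance (fun v => h (x, v)) ρ ∂ν := by
  have hint : Integrable (fun p => (h p - ∫ v, h (p.1, v) ∂ρ) ^ 2) (ν.prod ρ) :=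
    (hh.sub (hh.integral_prod_right.comp_fst ρ)).integrable_sq
  rw [integral_prod _ hint]
  refine integral_congr_ae ?_
  filter_upwards [hh.ae_memLp_prodMk_left] with x hx
  exact (variance_eq_integral hx.aestronglyMeasurable.aemeasurable).symm

lemma integral_mul_sub_prod_prod_eq_integral_variance [IsProbabilityMeasure ρ]
    (hh : MemLp h 2 (ν.prod ρ)) :
    ∫ p, h (p.1, p.2.1) * (h (p.1, p.2.1) - h (p.1, p.2.2)) ∂(ν.prod (ρ.prod ρ)) =
      ∫ x, variance (fun v => h (x, v)) ρ ∂ν := by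
  have h₁ : MemLp (fun p : α × β × β => h (p.1, p.2.1)) 2 (ν.prod (ρ.prod ρ)) :=
    hh.comp_measurePreserving ((MeasurePreserving.id ν).prod measurePreserving_fst)
  have h₂ : MemLp (fun p : α × β × β => h (p.1, p.2.2)) 2 (ν.prod (ρ.prod ρ)) :=
    hh.comp_measurePreserving ((MeasurePreserving.id ν).prod measurePreserving_snd)
  have hint : Integrable (fun p : α × β × β => h (p.1, p.2.1) * (h (p.1, p.2.1) - h (p.1, p.2.2)))
      (ν.prod (ρ.prod ρ)) := h₁.integrable_mul (h₁.sub h₂)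
  rw [integral_prod _ hint]
  refine integral_congr_ae ?_
  filter_upwards [hh.ae_memLp_prodMk_left] with x hx
  exact integral_mul_sub_prod_eq_variance hx

end Fiber

namespace ProbabilityTheory.IndepFun

variable {Ω α β : Type*} {mΩ : MeasurableSpace Ω} {mα : MeasurableSpace α} [MeasurableSpace β]
  {μ : Measure Ω} {X : Ω → α} {V W : Ω → β} {h : α × β → ℝ}

lemma condDistrib_ae_eq_const [IsFiniteMeasure μ] [StandardBorelSpace β] [Nonempty β]
    (hXV : IndepFun X V μ) (hX : Measurable X) (hV : AEMeasurable V μ) :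
    condDistrib V X μ =ᵐ[μ.map X] Kernel.const α (μ.map V) := by
  rw [condDistrib_ae_eq_iff_measure_eq_compProd X hV, Measure.compProd_const]
  exact hXV.map_prod_eq_prod_map_map hX.aemeasurable hV

lemma condExp_prodMk_ae_eq_integral [IsFiniteMeasure μ] [StandardBorelSpace β] [Nonempty β]
    (hXV : IndepFun X V μ) (hX : Measurable X) (hV : AEMeasurable V μ)
    (hh : StronglyMeasurable h) (hint : Integrable (fun ω => h (X ω, V ω)) μ) :
    μ[fun ω => h (X ω, V ω) | mα.comap X] =ᵐ[μ] fun ω => ∫ v, h (X ω, v) ∂(μ.map V) := by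
  filter_upwards [condExp_prod_ae_eq_integral_condDistrib hX hV hh hint,
    ae_of_ae_map hX.aemeasurable (hXV.condDistrib_ae_eq_const hX hV)] with ω hce hcd
  rw [hce, hcd, Kernel.const_apply]

lemma memLp_prod_map [IsFiniteMeasure μ] (hXV : IndepFun X V μ) (hX : Measurable X)
    (hV : Measurable V) (hh : Measurable h) (hY : MemLp (fun ω => h (X ω, V ω)) 2 μ) :
    MemLp h 2 ((μ.map X).prod (μ.map V)) := by
  rw [← hXV.map_prod_eq_prod_map_map hX.aemeasurable hV.aemeasurable]
  exact (memLp_map_measure_iff hh.aestronglyMeasurable (hX.prodMk hV).aemeasurable).2 hY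

lemma integral_sub_condExp_sq_eq_integral_variance
    [IsProbabilityMeasure μ] [StandardBorelSpace β] [Nonempty β] (hXV : IndepFun X V μ)
    (hX : Measurable X) (hV : Measurable V) (hh : Measurable h)
    (hY : MemLp (fun ω => h (X ω, V ω)) 2 μ) :
    ∫ ω, (h (X ω, V ω) - μ[fun ω => h (X ω, V ω) | mα.comap X] ω) ^ 2 ∂μ =
      ∫ x, variance (fun v => h (x, v)) (μ.map V) ∂(μ.map X) := by
  have := Measure.isProbabilityMeasure_map (μ := μ) hV.aemeasurable
  have hg : Measurable fun p : α × β => ∫ v, h (p.1, v) ∂(μ.map V) :=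
    hh.stronglyMeasurable.integral_prod_right'.measurable.comp measurable_fst
  calc ∫ ω, (h (X ω, V ω) - μ[fun ω => h (X ω, V ω) | mα.comap X] ω) ^ 2 ∂μ
      = ∫ ω, (h (X ω, V ω) - ∫ v, h (X ω, v) ∂(μ.map V)) ^ 2 ∂μ := by
        refine integral_congr_ae ?_
        filter_upwards [hXV.condExp_prodMk_ae_eq_integral hX hV.aemeasurable
          hh.stronglyMeasurable (hY.integrable one_le_two)] with ω hω
        rw [hω]
    _ = ∫ p, (h p - ∫ v, h (p.1, v) ∂(μ.map V)) ^ 2 ∂((μ.map X).prod (μ.map V)) := by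
        rw [← hXV.map_prod_eq_prod_map_map hX.aemeasurable hV.aemeasurable,
          integral_map (hX.prodMk hV).aemeasurable (by fun_prop)]
    _ = ∫ x, variance (fun v => h (x, v)) (μ.map V) ∂(μ.map X) :=
        integral_sub_integral_prod_right_sq_eq_integral_variance
          (hXV.memLp_prod_map hX hV hh hY)

lemma integral_mul_sub_eq_integral_variance [IsProbabilityMeasure μ]
    (hXVW : IndepFun X (fun ω => (V ω, W ω)) μ) (hVW : IndepFun V W μ)
    (hWV : μ.map W = μ.map V) (hX : Measurable X) (hV : Measurable V) (hW : Measurable W)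
    (hh : Measurable h) (hY : MemLp (fun ω => h (X ω, V ω)) 2 μ) :
    ∫ ω, h (X ω, V ω) * (h (X ω, V ω) - h (X ω, W ω)) ∂μ =
      ∫ x, variance (fun v => h (x, v)) (μ.map V) ∂(μ.map X) := by
  have := Measure.isProbabilityMeasure_map (μ := μ) hV.aemeasurable
  have hXV : IndepFun X V μ := hXVW.comp measurable_id measurable_fst
  have hlaw : μ.map (fun ω => (X ω, V ω, W ω)) = (μ.map X).prod ((μ.map V).prod (μ.map V)) := by
    rw [hXVW.map_prod_eq_prod_map_map hX.aemeasurable (hV.prodMk hW).aemeasurable,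
      hVW.map_prod_eq_prod_map_map hV.aemeasurable hW.aemeasurable, hWV]
  rw [← integral_mul_sub_prod_prod_eq_integral_variance (hXV.memLp_prod_map hX hV hh hY), ← hlaw,
    integral_map (hX.prodMk (hV.prodMk hW)).aemeasurable (by fun_prop)]

end ProbabilityTheory.IndepFun

theorem stmt_1_general {Ω : Type*} [MeasurableSpace Ω] {μ : Measure Ω} [IsProbabilityMeasure μ]
    {d k : ℕ} {X : Ω → (Fin d → ℝ)} {V Vt : Ω → (Fin k → ℝ)}
    (hX : Measurable X) (hV : Measurable V) (hVt : Measurable Vt)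
    (h_ident : Measure.map Vt μ = Measure.map V μ)
    (h_indep : iIndepFun
      (β := Fin.cons (Fin d → ℝ) (Fin.cons (Fin k → ℝ) (Fin.cons (Fin k → ℝ) finZeroElim)))
      (m := Fin.cons (inferInstance : MeasurableSpace (Fin d → ℝ))
        (Fin.cons (inferInstance : MeasurableSpace (Fin k → ℝ))
          (Fin.cons (inferInstance : MeasurableSpace (Fin k → ℝ)) finZeroElim)))
      (Fin.cons X (Fin.cons V (Fin.cons Vt finZeroElim))) μ)
    {h : (Fin d → ℝ) × (Fin k → ℝ) → ℝ} (hh : Measurable h)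
    {Y Z : Ω → ℝ} (hY : Y = fun ω => h (X ω, V ω)) (hZ : Z = fun ω => h (X ω, Vt ω))
    {fbar : (Fin d → ℝ) → ℝ}
    (hfbar : (fun ω => fbar (X ω)) =ᵐ[μ] μ[Y | MeasurableSpace.comap X inferInstance])
    (hY2 : Integrable (fun ω => (Y ω) ^ 2) μ) :
    ∫ ω, (Y ω - fbar (X ω)) ^ 2 ∂μ = ∫ ω, Y ω * (Y ω - Z ω) ∂μ := by
  subst hY hZ
  have hXV : IndepFun X V μ := h_indep.indepFun (i := 0) (j := 1) (by decide)
  have hVVt : IndepFun V Vt μ := h_indep.indepFun (i := 1) (j := 2) (by decide)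
  have hXVVt : IndepFun X (fun ω => (V ω, Vt ω)) μ :=
    (h_indep.indepFun_prodMk (fun i => by fin_cases i <;> assumption) 1 2 0
      (by decide) (by decide)).symm
  have hY₂ : MemLp (fun ω => h (X ω, V ω)) 2 μ :=
    (memLp_two_iff_integrable_sq (hh.comp (hX.prodMk hV)).aestronglyMeasurable).2 hY2
  calc ∫ ω, (h (X ω, V ω) - fbar (X ω)) ^ 2 ∂μ
      = ∫ ω, (h (X ω, V ω) - μ[fun ω => h (X ω, V ω) | MeasurableSpace.comap X inferInstance] ω)
          ^ 2 ∂μ :=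
        integral_congr_ae (hfbar.mono fun ω hω => congrArg (fun t => (h (X ω, V ω) - t) ^ 2) hω)
    _ = ∫ x, variance (fun v => h (x, v)) (μ.map V) ∂(μ.map X) :=
        hXV.integral_sub_condExp_sq_eq_integral_variance hX hV hh hY₂
    _ = ∫ ω, h (X ω, V ω) * (h (X ω, V ω) - h (X ω, Vt ω)) ∂μ :=
        (hXVVt.integral_mul_sub_eq_integral_variance hVVt h_ident hX hV hVt hh hY₂).symm

/-- If `E[Y²] < ∞`, then `E[(Y − f̄(X))²] = E[Y·(Y − Z)]`, where `Y = h(X,V)`, `Z = h(X,Ṽ)` with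
`X, V, Ṽ` mutually independent, `Ṽ ~ V`, and `f̄(X)` a version of `E[Y | X]`. -/
theorem stmt_1 {Ω : Type*} [MeasurableSpace Ω] {μ : Measure Ω} [IsProbabilityMeasure μ]
    {d k : ℕ} {X : Ω → (Fin d → ℝ)} {V Vt : Ω → (Fin k → ℝ)}
    (hX : Measurable X) (hV : Measurable V) (hVt : Measurable Vt)
    (h_ident : Measure.map Vt μ = Measure.map V μ)
    (h_indep : iIndepFun
      (β := Fin.cons (Fin d → ℝ) (Fin.cons (Fin k → ℝ) (Fin.cons (Fin k → ℝ) finZeroElim)))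
      (m := Fin.cons (inferInstance : MeasurableSpace (Fin d → ℝ))
        (Fin.cons (inferInstance : MeasurableSpace (Fin k → ℝ))
          (Fin.cons (inferInstance : MeasurableSpace (Fin k → ℝ)) finZeroElim)))
      (Fin.cons X (Fin.cons V (Fin.cons Vt finZeroElim))) μ)
    {h : (Fin d → ℝ) × (Fin k → ℝ) → ℝ} (hh : Measurable h)
    {Y Z : Ω → ℝ} (hY : Y = fun ω => h (X ω, V ω)) (hZ : Z = fun ω => h (X ω, Vt ω))
    {fbar : (Fin d → ℝ) → ℝ} (hfbar_meas : Measurable fbar)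
    (hfbar : (fun ω => fbar (X ω)) =ᵐ[μ] μ[Y | MeasurableSpace.comap X inferInstance])
    (hY2 : Integrable (fun ω => (Y ω) ^ 2) μ) :
    ∫ ω, (Y ω - fbar (X ω)) ^ 2 ∂μ = ∫ ω, Y ω * (Y ω - Z ω) ∂μ :=
  stmt_1_general hX hV hVt h_ident h_indep hh hY hZ hfbar hY2
end

section
/- If E[Y²] < ∞ and f̂ : ℝ^d → ℝ is a Borel function with E[f̂(X)²] < ∞, then the squared L²-approximation error satisfies E[(f̂(X) − f̄(X))²] = E[Y·Z + f̂(X)·(f̂(X) − Y − Z)]. -/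
/-!
Let `g x = E[h(x, V)]`. Since `V` and `Ṽ` are independent of `X`, conditioning on `X` amounts to
integrating them out against their common law, so `f̄(X) = g(X)` almost surely,
`E[f̂(X) Y] = E[f̂(X) Z] = E[f̂(X) g(X)]`, and, because `V` and `Ṽ` are moreover independent of
each other, `E[Y Z] = E[g(X)²]`. Expanding `(f̂(X) - g(X))²` gives the identity.
-/

open MeasureTheory ProbabilityTheory Filter

section Independence

variable {Ω α β : Type*} {mΩ : MeasurableSpace Ω} {mα : MeasurableSpace α}
  [MeasurableSpace β] [StandardBorelSpace β] [Nonempty β]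
  {μ : Measure Ω} [IsProbabilityMeasure μ] {X : Ω → α} {W : Ω → β}

lemma condExp_comp_prodMk_ae_eq_integral_of_indepFun (hX : Measurable X) (hW : Measurable W)
    (hXW : IndepFun X W μ) {f : α × β → ℝ} (hf : Measurable f)
    (hf_int : Integrable (fun ω => f (X ω, W ω)) μ) :
    μ[fun ω => f (X ω, W ω) | mα.comap X] =ᵐ[μ] fun ω => ∫ w, f (X ω, w) ∂(μ.map W) := by
  have hcond : condDistrib W X μ =ᵐ[μ.map X] Kernel.const α (μ.map W) := by
    refine condDistrib_ae_eq_of_measure_eq_compProd_of_measurable hX hW ?_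
    rw [Measure.compProd_const]
    exact (indepFun_iff_map_prod_eq_prod_map_map hX.aemeasurable hW.aemeasurable).mp hXW
  filter_upwards [condExp_prod_ae_eq_integral_condDistrib hX hW.aemeasurable
    hf.stronglyMeasurable hf_int, ae_of_ae_map hX.aemeasurable hcond] with ω hω hωX
  rw [hω, hωX, Kernel.const_apply]

lemma integral_comp_prodMk_of_indepFun (hX : Measurable X) (hW : Measurable W)
    (hXW : IndepFun X W μ) {f : α × β → ℝ} (hf : Measurable f)
    (hf_int : Integrable (fun ω => f (X ω, W ω)) μ) :
    ∫ ω, f (X ω, W ω) ∂μ = ∫ ω, ∫ w, f (X ω, w) ∂(μ.map W) ∂μ := by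
  rw [← integral_condExp hX.comap_le]
  exact integral_congr_ae (condExp_comp_prodMk_ae_eq_integral_of_indepFun hX hW hXW hf hf_int)

lemma integral_comp_mul_comp_prodMk_of_indepFun (hX : Measurable X) (hW : Measurable W)
    (hXW : IndepFun X W μ) {a : α → ℝ} (ha : Measurable a) {f : α × β → ℝ} (hf : Measurable f)
    (h_int : Integrable (fun ω => a (X ω) * f (X ω, W ω)) μ) :
    ∫ ω, a (X ω) * f (X ω, W ω) ∂μ = ∫ ω, a (X ω) * ∫ w, f (X ω, w) ∂(μ.map W) ∂μ := by
  rw [integral_comp_prodMk_of_indepFun hX hW hXW (f := fun p => a p.1 * f p)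
    ((ha.comp measurable_fst).mul hf) h_int]
  simp only [integral_const_mul]

lemma integral_comp_prodMk_mul_comp_prodMk_of_indepFun {V : Ω → β} (hX : Measurable X)
    (hV : Measurable V) (hW : Measurable W) (hXVW : IndepFun X (fun ω => (V ω, W ω)) μ)
    (hVW : IndepFun V W μ) (hlaw : μ.map W = μ.map V) {f : α × β → ℝ} (hf : Measurable f)
    (h_int : Integrable (fun ω => f (X ω, V ω) * f (X ω, W ω)) μ) :
    ∫ ω, f (X ω, V ω) * f (X ω, W ω) ∂μ = ∫ ω, (∫ v, f (X ω, v) ∂(μ.map V)) ^ 2 ∂μ := by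
  have hlawVW : μ.map (fun ω => (V ω, W ω)) = (μ.map V).prod (μ.map V) := by
    rw [(indepFun_iff_map_prod_eq_prod_map_map hV.aemeasurable hW.aemeasurable).mp hVW, hlaw]
  rw [integral_comp_prodMk_of_indepFun hX (hV.prodMk hW) hXVW
    (f := fun p => f (p.1, p.2.1) * f (p.1, p.2.2))
    ((hf.comp (measurable_fst.prodMk measurable_snd.fst)).mul
      (hf.comp (measurable_fst.prodMk measurable_snd.snd))) h_int]
  simp only [hlawVW, sq]
  exact integral_congr_ae (ae_of_all _ fun ω =>
    integral_prod_mul (fun v => f (X ω, v)) (fun w => f (X ω, w)))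

end Independence

lemma integral_sq_sub_eq_of_integral_mul_eq {Ω : Type*} {mΩ : MeasurableSpace Ω} {μ : Measure Ω}
    {a b Y Z : Ω → ℝ} (ha : MemLp a 2 μ) (hb : MemLp b 2 μ) (hY : MemLp Y 2 μ) (hZ : MemLp Z 2 μ)
    (hYZ : ∫ ω, Y ω * Z ω ∂μ = ∫ ω, b ω ^ 2 ∂μ)
    (haY : ∫ ω, a ω * Y ω ∂μ = ∫ ω, a ω * b ω ∂μ)
    (haZ : ∫ ω, a ω * Z ω ∂μ = ∫ ω, a ω * b ω ∂μ) :
    ∫ ω, (a ω - b ω) ^ 2 ∂μ = ∫ ω, Y ω * Z ω + a ω * (a ω - Y ω - Z ω) ∂μ := by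
  have haa_int : Integrable (fun ω => a ω * a ω) μ := ha.integrable_mul ha
  have h2ab_int : Integrable (fun ω => 2 * (a ω * b ω)) μ := (ha.integrable_mul hb).const_mul 2
  have haY_int : Integrable (fun ω => a ω * Y ω) μ := ha.integrable_mul hY
  have haZ_int : Integrable (fun ω => a ω * Z ω) μ := ha.integrable_mul hZ
  have hYZ_int : Integrable (fun ω => Y ω * Z ω) μ := hY.integrable_mul hZ
  have hlhs : ∫ ω, (a ω - b ω) ^ 2 ∂μ
      = ∫ ω, a ω * a ω ∂μ - 2 * ∫ ω, a ω * b ω ∂μ + ∫ ω, b ω ^ 2 ∂μ := by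
    have hexpand : (fun ω => (a ω - b ω) ^ 2)
        = fun ω => a ω * a ω - 2 * (a ω * b ω) + b ω ^ 2 := by
      ext ω; ring
    rw [hexpand, integral_add ?_ hb.integrable_sq, integral_sub haa_int h2ab_int,
      integral_const_mul]
    exact haa_int.sub h2ab_int
  have hrhs : ∫ ω, Y ω * Z ω + a ω * (a ω - Y ω - Z ω) ∂μ
      = ∫ ω, Y ω * Z ω ∂μ + (∫ ω, a ω * a ω ∂μ - ∫ ω, a ω * Y ω ∂μ - ∫ ω, a ω * Z ω ∂μ) := by
    simp_rw [mul_sub]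
    rw [integral_add hYZ_int ?_, integral_sub ?_ haZ_int, integral_sub haa_int haY_int]
    exacts [haa_int.sub haY_int, (haa_int.sub haY_int).sub haZ_int]
  rw [hlhs, hrhs, hYZ, haY, haZ]
  ring

theorem stmt_2_general {Ω : Type*} [MeasurableSpace Ω] {μ : Measure Ω} [IsProbabilityMeasure μ]
    {d k : ℕ} {X : Ω → (Fin d → ℝ)} {V Vt : Ω → (Fin k → ℝ)}
    (hX : Measurable X) (hV : Measurable V) (hVt : Measurable Vt)
    (h_ident : Measure.map Vt μ = Measure.map V μ)
    (h_indep : iIndepFun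
      (β := Fin.cons (Fin d → ℝ) (Fin.cons (Fin k → ℝ) (Fin.cons (Fin k → ℝ) finZeroElim)))
      (m := Fin.cons (inferInstance : MeasurableSpace (Fin d → ℝ))
        (Fin.cons (inferInstance : MeasurableSpace (Fin k → ℝ))
          (Fin.cons (inferInstance : MeasurableSpace (Fin k → ℝ)) finZeroElim)))
      (Fin.cons X (Fin.cons V (Fin.cons Vt finZeroElim))) μ)
    {h : (Fin d → ℝ) × (Fin k → ℝ) → ℝ} (hh : Measurable h)
    {Y Z : Ω → ℝ} (hY : Y = fun ω => h (X ω, V ω)) (hZ : Z = fun ω => h (X ω, Vt ω))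
    {fbar : (Fin d → ℝ) → ℝ}
    (hfbar : (fun ω => fbar (X ω)) =ᵐ[μ] μ[Y | MeasurableSpace.comap X inferInstance])
    (hY2 : Integrable (fun ω => (Y ω) ^ 2) μ)
    {fhat : (Fin d → ℝ) → ℝ} (hfhat_meas : Measurable fhat)
    (hfhat2 : Integrable (fun ω => (fhat (X ω)) ^ 2) μ) :
    ∫ ω, (fhat (X ω) - fbar (X ω)) ^ 2 ∂μ
      = ∫ ω, Y ω * Z ω + fhat (X ω) * (fhat (X ω) - Y ω - Z ω) ∂μ := by
  subst hY hZ
  have hXV : IndepFun X V μ := h_indep.indepFun (show (0 : Fin 3) ≠ 1 by decide)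
  have hXVt : IndepFun X Vt μ := h_indep.indepFun (show (0 : Fin 3) ≠ 2 by decide)
  have hVVt : IndepFun V Vt μ := h_indep.indepFun (show (1 : Fin 3) ≠ 2 by decide)
  have hXVVt : IndepFun X (fun ω => (V ω, Vt ω)) μ := by
    refine (h_indep.indepFun_prodMk (fun i => ?_) 1 2 0 (by decide) (by decide)).symm
    fin_cases i <;> assumption
  have hlaw : μ.map (fun ω => (X ω, Vt ω)) = μ.map (fun ω => (X ω, V ω)) := by
    rw [(indepFun_iff_map_prod_eq_prod_map_map hX.aemeasurable hVt.aemeasurable).mp hXVt,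
      (indepFun_iff_map_prod_eq_prod_map_map hX.aemeasurable hV.aemeasurable).mp hXV, h_ident]
  have hYL2 : MemLp (fun ω => h (X ω, V ω)) 2 μ :=
    (memLp_two_iff_integrable_sq (hh.comp (hX.prodMk hV)).aestronglyMeasurable).mpr hY2
  have hZL2 : MemLp (fun ω => h (X ω, Vt ω)) 2 μ :=
    (IdentDistrib.comp ⟨(hX.prodMk hV).aemeasurable, (hX.prodMk hVt).aemeasurable, hlaw.symm⟩
      hh).memLp_snd hYL2
  have hfhatL2 : MemLp (fun ω => fhat (X ω)) 2 μ :=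
    (memLp_two_iff_integrable_sq (hfhat_meas.comp hX).aestronglyMeasurable).mpr hfhat2
  have hfbarL2 : MemLp (fun ω => fbar (X ω)) 2 μ := (hYL2.condExp one_le_two).ae_eq hfbar.symm
  have hfbar_eq : ∀ᵐ ω ∂μ, fbar (X ω) = ∫ v, h (X ω, v) ∂(μ.map V) :=
    hfbar.trans (condExp_comp_prodMk_ae_eq_integral_of_indepFun hX hV hXV hh
      (hYL2.integrable one_le_two))
  refine integral_sq_sub_eq_of_integral_mul_eq hfhatL2 hfbarL2 hYL2 hZL2 ?_ ?_ ?_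
  · rw [integral_comp_prodMk_mul_comp_prodMk_of_indepFun hX hV hVt hXVVt hVVt h_ident hh
      (hYL2.integrable_mul hZL2)]
    exact integral_congr_ae (hfbar_eq.mono fun ω hω => by dsimp only; rw [hω])
  · rw [integral_comp_mul_comp_prodMk_of_indepFun hX hV hXV hfhat_meas hh
      (hfhatL2.integrable_mul hYL2)]
    exact integral_congr_ae (hfbar_eq.mono fun ω hω => by dsimp only; rw [hω])
  · rw [integral_comp_mul_comp_prodMk_of_indepFun hX hVt hXVt hfhat_meas hh
      (hfhatL2.integrable_mul hZL2), h_ident]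
    exact integral_congr_ae (hfbar_eq.mono fun ω hω => by dsimp only; rw [hω])

/-- If `E[Y²] < ∞` and `f̂` is Borel with `E[f̂(X)²] < ∞`, then
`E[(f̂(X) − f̄(X))²] = E[Y·Z + f̂(X)·(f̂(X) − Y − Z)]`. -/
theorem stmt_2 {Ω : Type*} [MeasurableSpace Ω] {μ : Measure Ω} [IsProbabilityMeasure μ]
    {d k : ℕ} {X : Ω → (Fin d → ℝ)} {V Vt : Ω → (Fin k → ℝ)}
    (hX : Measurable X) (hV : Measurable V) (hVt : Measurable Vt)
    (h_ident : Measure.map Vt μ = Measure.map V μ)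
    (h_indep : iIndepFun
      (β := Fin.cons (Fin d → ℝ) (Fin.cons (Fin k → ℝ) (Fin.cons (Fin k → ℝ) finZeroElim)))
      (m := Fin.cons (inferInstance : MeasurableSpace (Fin d → ℝ))
        (Fin.cons (inferInstance : MeasurableSpace (Fin k → ℝ))
          (Fin.cons (inferInstance : MeasurableSpace (Fin k → ℝ)) finZeroElim)))
      (Fin.cons X (Fin.cons V (Fin.cons Vt finZeroElim))) μ)
    {h : (Fin d → ℝ) × (Fin k → ℝ) → ℝ} (hh : Measurable h)
    {Y Z : Ω → ℝ} (hY : Y = fun ω => h (X ω, V ω)) (hZ : Z = fun ω => h (X ω, Vt ω))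
    {fbar : (Fin d → ℝ) → ℝ} (hfbar_meas : Measurable fbar)
    (hfbar : (fun ω => fbar (X ω)) =ᵐ[μ] μ[Y | MeasurableSpace.comap X inferInstance])
    (hY2 : Integrable (fun ω => (Y ω) ^ 2) μ)
    {fhat : (Fin d → ℝ) → ℝ} (hfhat_meas : Measurable fhat)
    (hfhat2 : Integrable (fun ω => (fhat (X ω)) ^ 2) μ) :
    ∫ ω, (fhat (X ω) - fbar (X ω)) ^ 2 ∂μ
      = ∫ ω, Y ω * Z ω + fhat (X ω) * (fhat (X ω) - Y ω - Z ω) ∂μ :=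
  stmt_2_general hX hV hVt h_ident h_indep hh hY hZ hfbar hY2 hfhat_meas hfhat2
end

section
/- Let f : ℝ^d → ℝ be a Borel function with ∫ f² dν_X < ∞ that is continuous at a point x₀ ∈ ℝ^d. Let (ν_n)_{n≥1} be Borel probability measures on ℝ^d given by dν_n/dν_X = p_n for Borel functions p_n : ℝ^d → [0,∞) satisfying ∫ p_n dν_X = 1 for all n ≥ 1 and sup{ p_n(x) : ‖x − x₀‖₂ > 1/n } → 0 as n → ∞. Then the L²(ν_n)-norms converge: √(∫ f² dν_n) → |f(x₀)| as n → ∞. -/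
/-! The densities `p n` form a sequence of peak functions at `x₀` for the finite measure `ν_X`: they
are nonnegative with total mass one and tend to zero uniformly off every neighbourhood of `x₀`.
Integrating the `ν_X`-integrable function `f²`, continuous at `x₀`, against them therefore gives
`∫ f² dν_n → f(x₀)²`, and the claim follows by continuity of the square root. -/

open MeasureTheory Filter Topology

theorem integral_withDensity_ofReal {X E : Type*} [MeasurableSpace X] [NormedAddCommGroup E]
    [NormedSpace ℝ E] {μ : Measure X} {p : X → ℝ} (hp : AEMeasurable p μ) (hp0 : 0 ≤ᵐ[μ] p)
    (g : X → E) :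
    ∫ x, g x ∂μ.withDensity (fun x => ENNReal.ofReal (p x)) = ∫ x, p x • g x ∂μ := by
  rw [integral_withDensity_eq_integral_toReal_smul₀ hp.ennreal_ofReal
    (.of_forall fun _ => ENNReal.ofReal_lt_top)]
  refine integral_congr_ae ?_
  filter_upwards [hp0] with x hx
  rw [ENNReal.toReal_ofReal hx]

section PeakFunctions

variable {X : Type*} [PseudoMetricSpace X] {p : ℕ → X → ℝ} {x₀ : X}

theorem tendstoUniformlyOn_compl_of_le_of_one_div_lt_dist (hp0 : ∀ n x, 0 ≤ p n x)
    (hp : ∀ ε > 0, ∃ N : ℕ, ∀ n ≥ N, ∀ x, 1 / (n : ℝ) < dist x x₀ → p n x ≤ ε)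
    {u : Set X} (hu : u ∈ 𝓝 x₀) : TendstoUniformlyOn p 0 atTop uᶜ := by
  obtain ⟨δ, hδ, hball⟩ := Metric.mem_nhds_iff.mp hu
  refine Metric.tendstoUniformlyOn_iff.mpr fun ε hε => ?_
  obtain ⟨N, hN⟩ := hp (ε / 2) (half_pos hε)
  filter_upwards [eventually_ge_atTop N,
    (tendsto_one_div_atTop_nhds_zero_nat.eventually (gt_mem_nhds hδ))] with n hnN hnδ x hx
  have hfar : δ ≤ dist x x₀ := not_lt.mp fun h => hx (hball h)
  rw [Pi.zero_apply, dist_zero_left, Real.norm_of_nonneg (hp0 n x)]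
  exact (hN n hnN x (hnδ.trans_le hfar)).trans_lt (half_lt_self hε)

variable [MeasurableSpace X] [BorelSpace X] {μ : Measure X} [IsFiniteMeasure μ]
  {E : Type*} [NormedAddCommGroup E] [NormedSpace ℝ E] [CompleteSpace E]

theorem tendsto_integral_smul_of_le_of_one_div_lt_dist (hp0 : ∀ n x, 0 ≤ p n x)
    (hp_int : ∀ n, ∫ x, p n x ∂μ = 1)
    (hp : ∀ ε > 0, ∃ N : ℕ, ∀ n ≥ N, ∀ x, 1 / (n : ℝ) < dist x x₀ → p n x ≤ ε)
    {g : X → E} (hg : Integrable g μ) (hgc : ContinuousAt g x₀) :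
    Tendsto (fun n => ∫ x, p n x • g x ∂μ) atTop (𝓝 (g x₀)) :=
  tendsto_integral_peak_smul_of_integrable_of_tendsto MeasurableSet.univ univ_mem
    (measure_ne_top μ _) (.of_forall hp0)
    (fun _ hu hx₀ => tendstoUniformlyOn_compl_of_le_of_one_div_lt_dist hp0 hp (hu.mem_nhds hx₀))
    (by simp [hp_int])
    (.of_forall fun n => (Integrable.of_integral_ne_zero (by simp [hp_int n])).aestronglyMeasurable)
    hg hgc

end PeakFunctions

theorem stmt_9_general {d : ℕ} (νX : Measure (EuclideanSpace ℝ (Fin d))) [IsProbabilityMeasure νX]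
    {f : EuclideanSpace ℝ (Fin d) → ℝ}
    (hf2 : Integrable (fun x => (f x) ^ 2) νX)
    {x₀ : EuclideanSpace ℝ (Fin d)} (hf_cont : ContinuousAt f x₀)
    {p : ℕ → EuclideanSpace ℝ (Fin d) → ℝ}
    (hp_nonneg : ∀ n x, 0 ≤ p n x)
    {ν : ℕ → Measure (EuclideanSpace ℝ (Fin d))}
    (hν : ∀ n, ν n = νX.withDensity (fun x => ENNReal.ofReal (p n x)))
    (hp_int : ∀ n, ∫ x, p n x ∂νX = 1)
    (hp_sup : ∀ ε > 0, ∃ N : ℕ, ∀ n ≥ N, ∀ x, ‖x - x₀‖ > 1 / (n : ℝ) → p n x ≤ ε) :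
    Tendsto (fun n => Real.sqrt (∫ x, (f x) ^ 2 ∂(ν n))) atTop (nhds |f x₀|) := by
  have hν_integral : ∀ n, ∫ x, (f x) ^ 2 ∂(ν n) = ∫ x, p n x • (f x) ^ 2 ∂νX := fun n => by
    rw [hν n, integral_withDensity_ofReal
      (Integrable.of_integral_ne_zero (by simp [hp_int n])).aemeasurable
      (.of_forall (hp_nonneg n))]
  have hf2_tendsto : Tendsto (fun n => ∫ x, (f x) ^ 2 ∂(ν n)) atTop (𝓝 (f x₀ ^ 2)) := by
    simp only [hν_integral]
    exact tendsto_integral_smul_of_le_of_one_div_lt_dist hp_nonneg hp_int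
      (fun ε hε => by simpa only [dist_eq_norm, gt_iff_lt] using hp_sup ε hε) hf2 (hf_cont.pow 2)
  simpa only [Real.sqrt_sq_eq_abs] using hf2_tendsto.sqrt

/-- If `f` is Borel with `∫ f² dν_X < ∞` and continuous at `x₀`, and `ν_n` are probability
measures with densities `p_n` w.r.t. `ν_X` such that `∫ p_n dν_X = 1` and
`sup{p_n(x) : ‖x − x₀‖₂ > 1/n} → 0`, then `‖f‖_{L²(ν_n)} → |f(x₀)|`. -/
theorem stmt_9 {d : ℕ} (νX : Measure (EuclideanSpace ℝ (Fin d))) [IsProbabilityMeasure νX]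
    {f : EuclideanSpace ℝ (Fin d) → ℝ} (hf_meas : Measurable f)
    (hf2 : Integrable (fun x => (f x) ^ 2) νX)
    {x₀ : EuclideanSpace ℝ (Fin d)} (hf_cont : ContinuousAt f x₀)
    {p : ℕ → EuclideanSpace ℝ (Fin d) → ℝ} (hp_meas : ∀ n, Measurable (p n))
    (hp_nonneg : ∀ n x, 0 ≤ p n x)
    {ν : ℕ → Measure (EuclideanSpace ℝ (Fin d))}
    (hν : ∀ n, ν n = νX.withDensity (fun x => ENNReal.ofReal (p n x)))
    (hp_int : ∀ n, ∫ x, p n x ∂νX = 1)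
    (hp_sup : ∀ ε > 0, ∃ N : ℕ, ∀ n ≥ N, ∀ x, ‖x - x₀‖ > 1 / (n : ℝ) → p n x ≤ ε) :
    Tendsto (fun n => Real.sqrt (∫ x, (f x) ^ 2 ∂(ν n))) atTop (nhds |f x₀|) :=
  stmt_9_general νX hf2 hf_cont hp_nonneg hν hp_int hp_sup
end

section
/- If E[Y²] < ∞, then almost surely the Monte Carlo averages converge: (1/N)·Σ_{n=1}^N Yₙ·Zₙ → E[f̄(X)²] and (1/N)·Σ_{n=1}^N Yₙ·(Yₙ − Zₙ) → E[(Y − f̄(X))²] as N → ∞, where (Xₙ, Yₙ, Zₙ) are i.i.d. copies of (X, Y, Z). -/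
/-!
Conditionally on `X`, the variables `Y = h (X, V)` and `Z = h (X, Ṽ)` are independent with the
same conditional mean `f̄ (X)`, so `E[Y Z] = E[f̄ (X)²]`. As `f̄ (X)` is the `L²`-projection of `Y`,
also `E[(Y - f̄ (X))²] = E[Y²] - E[f̄ (X)²] = E[Y (Y - Z)]`. Since `Z` has the law of `Y`, both
`Y Z` and `Y (Y - Z)` are integrable, and the strong law of large numbers gives the two limits.
-/

open MeasureTheory ProbabilityTheory Filter

theorem integral_sub_sq_of_ae_eq_condExp {Ω : Type*} {m m₀ : MeasurableSpace Ω}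
    {μ : Measure Ω} [IsFiniteMeasure μ] (hm : m ≤ m₀) {Y g : Ω → ℝ} (hY : MemLp Y 2 μ)
    (hg : g =ᵐ[μ] μ[Y | m]) :
    ∫ ω, (Y ω - g ω) ^ 2 ∂μ = ∫ ω, Y ω ^ 2 ∂μ - ∫ ω, g ω ^ 2 ∂μ := by
  have hcondExp : MemLp (μ[Y | m]) 2 μ := hY.condExp one_le_two
  calc ∫ ω, (Y ω - g ω) ^ 2 ∂μ = ∫ ω, Var[Y; μ | m] ω ∂μ :=
        (integral_congr_ae (by filter_upwards [hg] with ω hω using by simp [hω])).trans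
          (integral_condExp hm).symm
    _ = ∫ ω, (μ[Y ^ 2 | m] ω - μ[Y | m] ω ^ 2) ∂μ :=
        integral_congr_ae (condVar_ae_eq_condExp_sq_sub_sq_condExp hm hY)
    _ = ∫ ω, Y ω ^ 2 ∂μ - ∫ ω, g ω ^ 2 ∂μ := by
        rw [integral_sub integrable_condExp hcondExp.integrable_sq, integral_condExp hm]
        congr 1
        exact integral_congr_ae (by filter_upwards [hg] with ω hω using by rw [hω])

section

variable {Ω α β : Type*} [MeasurableSpace Ω] [MeasurableSpace α] [MeasurableSpace β]
  {μ : Measure Ω} {X : Ω → α}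

theorem ProbabilityTheory.IndepFun.condExp_comp_prodMk_ae_eq [IsFiniteMeasure μ]
    [StandardBorelSpace β] [Nonempty β] {W : Ω → β} (hXW : IndepFun X W μ) (hX : Measurable X)
    (hW : Measurable W) {F : α × β → ℝ} (hF : StronglyMeasurable F)
    (hint : Integrable (fun ω => F (X ω, W ω)) μ) :
    μ[fun ω => F (X ω, W ω) | MeasurableSpace.comap X inferInstance]
      =ᵐ[μ] fun ω => ∫ w, F (X ω, w) ∂(μ.map W) := by
  have hcondDistrib : condDistrib W X μ =ᵐ[μ.map X] Kernel.const α (μ.map W) := by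
    rw [condDistrib_ae_eq_iff_measure_eq_compProd X hW.aemeasurable, Measure.compProd_const]
    exact hXW.map_prod_eq_prod_map_map hX.aemeasurable hW.aemeasurable
  filter_upwards [condExp_prod_ae_eq_integral_condDistrib hX hW.aemeasurable hF hint,
    ae_of_ae_map hX.aemeasurable hcondDistrib] with ω hω hωX
  rw [hω, hωX, Kernel.const_apply]

theorem ProbabilityTheory.IndepFun.identDistrib_resample [IsFiniteMeasure μ] {V V' : Ω → β}
    (hXV : IndepFun X V μ) (hXV' : IndepFun X V' μ) (hX : Measurable X) (hV : Measurable V)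
    (hV' : Measurable V') (hident : μ.map V' = μ.map V) {h : α × β → ℝ} (hh : Measurable h) :
    IdentDistrib (fun ω => h (X ω, V' ω)) (fun ω => h (X ω, V ω)) μ μ :=
  ((IdentDistrib.refl hX.aemeasurable).prodMk ⟨hV'.aemeasurable, hV.aemeasurable, hident⟩
    hXV' hXV).comp hh

theorem integral_mul_resample_eq_integral_sq [IsFiniteMeasure μ] [StandardBorelSpace β]
    [Nonempty β] {V V' : Ω → β} (hX : Measurable X) (hV : Measurable V) (hV' : Measurable V')
    (hXVV' : IndepFun X (fun ω => (V ω, V' ω)) μ) (hVV' : IndepFun V V' μ)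
    (hident : μ.map V' = μ.map V) {h : α × β → ℝ} (hh : Measurable h)
    (hint : Integrable (fun ω => h (X ω, V ω)) μ)
    (hint_mul : Integrable (fun ω => h (X ω, V ω) * h (X ω, V' ω)) μ) {g : Ω → ℝ}
    (hg : g =ᵐ[μ] μ[fun ω => h (X ω, V ω) | MeasurableSpace.comap X inferInstance]) :
    ∫ ω, h (X ω, V ω) * h (X ω, V' ω) ∂μ = ∫ ω, g ω ^ 2 ∂μ := by
  have hXV : IndepFun X V μ := hXVV'.comp measurable_id measurable_fst
  have hlaw : μ.map (fun ω => (V ω, V' ω)) = (μ.map V).prod (μ.map V) := by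
    rw [hVV'.map_prod_eq_prod_map_map hV.aemeasurable hV'.aemeasurable, hident]
  have hmul := hXVV'.condExp_comp_prodMk_ae_eq hX (hV.prodMk hV')
    (F := fun p => h (p.1, p.2.1) * h (p.1, p.2.2)) (by fun_prop) hint_mul
  calc ∫ ω, h (X ω, V ω) * h (X ω, V' ω) ∂μ
      = ∫ ω, ∫ w, h (X ω, w.1) * h (X ω, w.2) ∂(μ.map fun ω => (V ω, V' ω)) ∂μ :=
        (integral_condExp hX.comap_le).symm.trans (integral_congr_ae hmul)
    _ = ∫ ω, (∫ v, h (X ω, v) ∂(μ.map V)) ^ 2 ∂μ := by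
        refine integral_congr_ae (Eventually.of_forall fun ω => ?_)
        simp only [hlaw, sq]
        exact integral_prod_mul (fun v => h (X ω, v)) (fun v => h (X ω, v))
    _ = ∫ ω, g ω ^ 2 ∂μ := by
        refine integral_congr_ae ?_
        filter_upwards [hg, hXV.condExp_comp_prodMk_ae_eq hX hV hh.stronglyMeasurable hint]
          with ω hgω hω
        rw [hgω, hω]

theorem ae_tendsto_avg_comp_of_iIndepFun {T : ℕ → Ω → β} {T₀ : Ω → β}
    (hind : iIndepFun T μ) (hident : ∀ n, IdentDistrib (T n) T₀ μ μ) {φ : β → ℝ}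
    (hφ : Measurable φ) (hint : Integrable (fun ω => φ (T₀ ω)) μ) :
    ∀ᵐ ω ∂μ, Tendsto (fun N : ℕ => (N : ℝ)⁻¹ * ∑ n ∈ Finset.range N, φ (T n ω)) atTop
      (nhds (∫ ω, φ (T₀ ω) ∂μ)) := by
  have hidentφ : ∀ n, IdentDistrib (fun ω => φ (T n ω)) (fun ω => φ (T₀ ω)) μ μ :=
    fun n => (hident n).comp hφ
  have hslln := strong_law_ae (fun n ω => φ (T n ω)) ((hidentφ 0).integrable_iff.2 hint)
    (fun i j hij => (hind.indepFun hij).comp hφ hφ)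
    (fun n => (hidentφ n).trans (hidentφ 0).symm)
  rw [← (hidentφ 0).integral_eq]
  simpa only [smul_eq_mul] using hslln

end

theorem stmt_11_general {Ω : Type*} [MeasurableSpace Ω] {μ : Measure Ω} [IsProbabilityMeasure μ]
    {d k : ℕ} {X : Ω → (Fin d → ℝ)} {V Vt : Ω → (Fin k → ℝ)}
    (hX : Measurable X) (hV : Measurable V) (hVt : Measurable Vt)
    (h_ident : Measure.map Vt μ = Measure.map V μ)
    (h_indep : iIndepFun
      (β := Fin.cons (Fin d → ℝ) (Fin.cons (Fin k → ℝ) (Fin.cons (Fin k → ℝ) finZeroElim)))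
      (m := Fin.cons (inferInstance : MeasurableSpace (Fin d → ℝ))
        (Fin.cons (inferInstance : MeasurableSpace (Fin k → ℝ))
          (Fin.cons (inferInstance : MeasurableSpace (Fin k → ℝ)) finZeroElim)))
      (Fin.cons X (Fin.cons V (Fin.cons Vt finZeroElim))) μ)
    {h : (Fin d → ℝ) × (Fin k → ℝ) → ℝ} (hh : Measurable h)
    {Y Z : Ω → ℝ} (hY : Y = fun ω => h (X ω, V ω)) (hZ : Z = fun ω => h (X ω, Vt ω))
    {fbar : (Fin d → ℝ) → ℝ}
    (hfbar : (fun ω => fbar (X ω)) =ᵐ[μ] μ[Y | MeasurableSpace.comap X inferInstance])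
    {Xs : ℕ → Ω → (Fin d → ℝ)} {Ys Zs : ℕ → Ω → ℝ}
    (hXs : ∀ n, Measurable (Xs n)) (hYs : ∀ n, Measurable (Ys n))
    (hZs : ∀ n, Measurable (Zs n))
    (hs_indep : iIndepFun (m := fun _ => inferInstance)
      (fun n ω => (Xs n ω, Ys n ω, Zs n ω)) μ)
    (hs_ident : ∀ n, Measure.map (fun ω => (Xs n ω, Ys n ω, Zs n ω)) μ
      = Measure.map (fun ω => (X ω, Y ω, Z ω)) μ)
    (hY2 : Integrable (fun ω => (Y ω) ^ 2) μ) :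
    ∀ᵐ ω ∂μ,
      Tendsto (fun N : ℕ => (N : ℝ)⁻¹ * ∑ n ∈ Finset.range N, Ys n ω * Zs n ω)
        atTop (nhds (∫ ω', (fbar (X ω')) ^ 2 ∂μ)) ∧
      Tendsto (fun N : ℕ => (N : ℝ)⁻¹ * ∑ n ∈ Finset.range N, Ys n ω * (Ys n ω - Zs n ω))
        atTop (nhds (∫ ω', (Y ω' - fbar (X ω')) ^ 2 ∂μ)) := by
  have hXVVt : IndepFun X (fun ω => (V ω, Vt ω)) μ :=
    (h_indep.indepFun_prodMk (fun i => Fin.cases hX (Fin.cases hV (Fin.cases hVt finZeroElim)) i)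
      1 2 0 (by decide) (by decide)).symm
  have hVVt : IndepFun V Vt μ := h_indep.indepFun (show (1 : Fin 3) ≠ 2 by decide)
  have hYm : Measurable Y := hY ▸ hh.comp (hX.prodMk hV)
  have hZm : Measurable Z := hZ ▸ hh.comp (hX.prodMk hVt)
  have hZY : IdentDistrib Z Y μ μ := hY ▸ hZ ▸
    (hXVVt.comp measurable_id measurable_fst).identDistrib_resample
      (hXVVt.comp measurable_id measurable_snd) hX hV hVt h_ident hh
  have hYL2 : MemLp Y 2 μ := (memLp_two_iff_integrable_sq hYm.aestronglyMeasurable).2 hY2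
  have hYZ : Integrable (fun ω => Y ω * Z ω) μ := hYL2.integrable_mul (hZY.memLp_iff.2 hYL2)
  have hmoment : ∫ ω, Y ω * Z ω ∂μ = ∫ ω, fbar (X ω) ^ 2 ∂μ := by
    subst hY hZ
    exact integral_mul_resample_eq_integral_sq hX hV hVt hXVVt hVVt h_ident hh
      (hYL2.integrable one_le_two) hYZ hfbar
  have hresidual : ∫ ω, Y ω * (Y ω - Z ω) ∂μ = ∫ ω, (Y ω - fbar (X ω)) ^ 2 ∂μ := by
    rw [integral_sub_sq_of_ae_eq_condExp hX.comap_le hYL2 hfbar, ← hmoment,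
      ← integral_sub hY2 hYZ]
    simp only [mul_sub, sq]
  have hYYZ : Integrable (fun ω => Y ω * (Y ω - Z ω)) μ :=
    (hY2.sub hYZ).congr (ae_of_all _ fun ω => by simp only [Pi.sub_apply]; ring)
  have hident : ∀ n, IdentDistrib (fun ω => (Xs n ω, Ys n ω, Zs n ω))
      (fun ω => (X ω, Y ω, Z ω)) μ μ :=
    fun n => ⟨((hXs n).prodMk ((hYs n).prodMk (hZs n))).aemeasurable,
      (hX.prodMk (hYm.prodMk hZm)).aemeasurable, hs_ident n⟩
  filter_upwards [ae_tendsto_avg_comp_of_iIndepFun hs_indep hident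
      (φ := fun p => p.2.1 * p.2.2) (by fun_prop) hYZ,
    ae_tendsto_avg_comp_of_iIndepFun hs_indep hident
      (φ := fun p => p.2.1 * (p.2.1 - p.2.2)) (by fun_prop) hYYZ]
    with ω hYZ_lim hresidual_lim
  exact ⟨hmoment ▸ hYZ_lim, hresidual ▸ hresidual_lim⟩

/-- If `E[Y²] < ∞`, then almost surely `N⁻¹ ∑_{n<N} Yₙ Zₙ → E[f̄(X)²]` and
`N⁻¹ ∑_{n<N} Yₙ (Yₙ − Zₙ) → E[(Y − f̄(X))²]` as `N → ∞`, where `(Xₙ, Yₙ, Zₙ)` are i.i.d.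
copies of `(X, Y, Z)` and `f̄(X)` is a version of `E[Y | X]`. -/
theorem stmt_11 {Ω : Type*} [MeasurableSpace Ω] {μ : Measure Ω} [IsProbabilityMeasure μ]
    {d k : ℕ} {X : Ω → (Fin d → ℝ)} {V Vt : Ω → (Fin k → ℝ)}
    (hX : Measurable X) (hV : Measurable V) (hVt : Measurable Vt)
    (h_ident : Measure.map Vt μ = Measure.map V μ)
    (h_indep : iIndepFun
      (β := Fin.cons (Fin d → ℝ) (Fin.cons (Fin k → ℝ) (Fin.cons (Fin k → ℝ) finZeroElim)))
      (m := Fin.cons (inferInstance : MeasurableSpace (Fin d → ℝ))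
        (Fin.cons (inferInstance : MeasurableSpace (Fin k → ℝ))
          (Fin.cons (inferInstance : MeasurableSpace (Fin k → ℝ)) finZeroElim)))
      (Fin.cons X (Fin.cons V (Fin.cons Vt finZeroElim))) μ)
    {h : (Fin d → ℝ) × (Fin k → ℝ) → ℝ} (hh : Measurable h)
    {Y Z : Ω → ℝ} (hY : Y = fun ω => h (X ω, V ω)) (hZ : Z = fun ω => h (X ω, Vt ω))
    {fbar : (Fin d → ℝ) → ℝ} (hfbar_meas : Measurable fbar)
    (hfbar : (fun ω => fbar (X ω)) =ᵐ[μ] μ[Y | MeasurableSpace.comap X inferInstance])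
    {Xs : ℕ → Ω → (Fin d → ℝ)} {Ys Zs : ℕ → Ω → ℝ}
    (hXs : ∀ n, Measurable (Xs n)) (hYs : ∀ n, Measurable (Ys n))
    (hZs : ∀ n, Measurable (Zs n))
    (hs_indep : iIndepFun (m := fun _ => inferInstance)
      (fun n ω => (Xs n ω, Ys n ω, Zs n ω)) μ)
    (hs_ident : ∀ n, Measure.map (fun ω => (Xs n ω, Ys n ω, Zs n ω)) μ
      = Measure.map (fun ω => (X ω, Y ω, Z ω)) μ)
    (hY2 : Integrable (fun ω => (Y ω) ^ 2) μ) :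
    ∀ᵐ ω ∂μ,
      Tendsto (fun N : ℕ => (N : ℝ)⁻¹ * ∑ n ∈ Finset.range N, Ys n ω * Zs n ω)
        atTop (nhds (∫ ω', (fbar (X ω')) ^ 2 ∂μ)) ∧
      Tendsto (fun N : ℕ => (N : ℝ)⁻¹ * ∑ n ∈ Finset.range N, Ys n ω * (Ys n ω - Zs n ω))
        atTop (nhds (∫ ω', (Y ω' - fbar (X ω')) ^ 2 ∂μ)) :=
  stmt_11_general hX hV hVt h_ident h_indep hh hY hZ hfbar hXs hYs hZs hs_indep hs_ident hY2
end

section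
/- Let ρ be a probability measure on ℝ^d × ℝ (the joint law of (X, Y)), let X have law equal to the first marginal of ρ, and let U be a random variable uniformly distributed on (0,1) and independent of X. Define g(x, u) = inf{ y ∈ ℝ : G(x, y) ≥ u }, where G(x, ·) is the conditional cumulative distribution function of the second coordinate given the first coordinate equals x (a regular version of y ↦ ρ-conditional probability of (−∞, y] given x). Then the pair (X, g(X, U)) has law ρ; in particular, every square-integrable Y admits a representation Y' = h(X, V) in distribution with V uniform on (0,1) independent of X. -/
/-! For `u ∈ (0, 1)`, right-continuity of `G x` gives the Galois connection
`g x u ≤ y ↔ u ≤ G x y`. By independence `(X, U)` has law `ρ.fst ⊗ Unif(0, 1)`, so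
`P(X ∈ A, g(X, U) ≤ y) = ∫_A P(U ≤ G(x, y)) dρ.fst = ∫_A G(x, y) dρ.fst = ρ(A × (-∞, y])`,
and the rectangles `A × (-∞, y]` determine a finite measure on a product with `ℝ`. -/

open MeasureTheory ProbabilityTheory Filter

open Set

namespace MeasureTheory.Measure

theorem ext_prod_Iic {α : Type*} [MeasurableSpace α] {μ ν : Measure (α × ℝ)} [IsFiniteMeasure μ]
    (h : ∀ A, MeasurableSet A → ∀ y, μ (A ×ˢ Iic y) = ν (A ×ˢ Iic y)) : μ = ν := by
  refine ext_prod fun {A t} hA ht => ?_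
  have hslice : ∀ κ : Measure (α × ℝ), ∀ s, MeasurableSet s →
      (κ.restrict (A ×ˢ univ)).snd s = κ (A ×ˢ s) := fun κ s hs => by
    rw [snd_apply hs, restrict_apply (measurable_snd hs), ← univ_prod, prod_inter_prod,
      univ_inter, inter_univ]
  have hsnd : (μ.restrict (A ×ˢ univ)).snd = (ν.restrict (A ×ˢ univ)).snd :=
    ext_of_Iic _ _ fun y => by
      rw [hslice μ _ measurableSet_Iic, hslice ν _ measurableSet_Iic, h A hA]
  rw [← hslice μ t ht, ← hslice ν t ht, hsnd]

theorem ae_snd_mem_prod_restrict {α β : Type*} [MeasurableSpace α] [MeasurableSpace β]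
    (μ : Measure α) {ν : Measure β} [SFinite ν] {s : Set β} (hs : MeasurableSet s) :
    ∀ᵐ p ∂μ.prod (ν.restrict s), p.2 ∈ s :=
  (ae_prod_iff_ae_ae (measurable_snd hs)).2 (ae_of_all _ fun _ => ae_restrict_mem hs)

end MeasureTheory.Measure

theorem volume_restrict_Ioo_zero_one_Iic {t : ℝ} (ht : t ∈ Icc 0 1) :
    volume.restrict (Ioo (0 : ℝ) 1) (Iic t) = ENNReal.ofReal t := by
  rw [Measure.restrict_apply measurableSet_Iic]
  refine le_antisymm ?_ ?_
  · calc volume (Iic t ∩ Ioo 0 1) ≤ volume (Ioc 0 t) := measure_mono fun u hu => ⟨hu.2.1, hu.1⟩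
      _ = ENNReal.ofReal t := by simp
  · calc ENNReal.ofReal t = volume (Ioo 0 t) := by simp
      _ ≤ volume (Iic t ∩ Ioo 0 1) :=
        measure_mono fun u hu => ⟨hu.2.le, hu.1, hu.2.trans_le ht.2⟩

theorem sInf_le_iff_le_of_rightContinuous {F : ℝ → ℝ} (hF_mono : Monotone F)
    (hF_rightCont : ∀ y, ContinuousWithinAt F (Ici y) y)
    (hF_bot : Tendsto F atBot (nhds 0)) (hF_top : Tendsto F atTop (nhds 1))
    {u : ℝ} (hu : u ∈ Ioo 0 1) (y : ℝ) :
    sInf {z | u ≤ F z} ≤ y ↔ u ≤ F y := by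
  set S := {z | u ≤ F z}
  have hne : S.Nonempty := (hF_top.eventually (eventually_ge_nhds hu.2)).exists
  obtain ⟨w, hw⟩ := (hF_bot.eventually (eventually_lt_nhds hu.1)).exists
  have hbdd : BddBelow S :=
    ⟨w, fun z hz => le_of_not_gt fun hzw => (hz.trans (hF_mono hzw.le)).not_gt hw⟩
  refine ⟨fun h => le_trans ?_ (hF_mono h), fun h => csInf_le hbdd h⟩
  -- `sInf S` is approached from within `S ⊆ Ici (sInf S)`, where `F` is right-continuous.
  have : (nhdsWithin (sInf S) S).NeBot :=
    mem_closure_iff_nhdsWithin_neBot.mp (csInf_mem_closure hne hbdd)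
  exact ge_of_tendsto ((hF_rightCont _).mono_left (nhdsWithin_mono _ fun z hz => csInf_le hbdd hz))
    (eventually_mem_nhdsWithin.mono fun z hz => hz)

section CondQuantile

variable {α : Type*} [MeasurableSpace α]

noncomputable def condQuantile (G : α → ℝ → ℝ) (x : α) (u : ℝ) : ℝ := sInf {y | u ≤ G x y}

theorem measurable_condQuantile_comp {β : Type*} [MeasurableSpace β] {G : α → ℝ → ℝ}
    (hG_meas : ∀ y, Measurable fun x => G x y) (hG_mono : ∀ x, Monotone (G x))
    (hG_rightCont : ∀ x y, ContinuousWithinAt (G x) (Ici y) y)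
    (hG_bot : ∀ x, Tendsto (G x) atBot (nhds 0)) (hG_top : ∀ x, Tendsto (G x) atTop (nhds 1))
    {x : β → α} {w : β → ℝ} (hx : Measurable x) (hw : Measurable w) (hw_mem : ∀ b, w b ∈ Ioo 0 1) :
    Measurable fun b => condQuantile G (x b) (w b) := by
  refine measurable_of_Iic fun y => ?_
  have : (fun b => condQuantile G (x b) (w b)) ⁻¹' Iic y = {b | w b ≤ G (x b) y} := by
    ext b
    exact sInf_le_iff_le_of_rightContinuous (hG_mono _) (hG_rightCont _) (hG_bot _) (hG_top _)
      (hw_mem b) y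
  rw [this]
  exact measurableSet_le hw ((hG_meas y).comp hx)

theorem aemeasurable_prod_condQuantile {G : α → ℝ → ℝ}
    (hG_meas : ∀ y, Measurable fun x => G x y) (hG_mono : ∀ x, Monotone (G x))
    (hG_rightCont : ∀ x y, ContinuousWithinAt (G x) (Ici y) y)
    (hG_bot : ∀ x, Tendsto (G x) atBot (nhds 0)) (hG_top : ∀ x, Tendsto (G x) atTop (nhds 1))
    (ν : Measure α) :
    AEMeasurable (fun p : α × ℝ => (p.1, condQuantile G p.1 p.2))
      (ν.prod (volume.restrict (Ioo 0 1))) := by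
  -- Off `(0, 1)` the second coordinate is moved to `1 / 2`, where the quantile is measurable.
  let w : α × ℝ → ℝ := fun p => if p.2 ∈ Ioo 0 1 then p.2 else 2⁻¹
  have hw : Measurable w := Measurable.ite (measurable_snd measurableSet_Ioo) measurable_snd
    measurable_const
  have hw_mem : ∀ p, w p ∈ Ioo 0 1 := fun p => by
    unfold w
    split_ifs with hp
    exacts [hp, by norm_num]
  refine measurable_fst.aemeasurable.prodMk ⟨_, measurable_condQuantile_comp hG_meas hG_mono
    hG_rightCont hG_bot hG_top measurable_fst hw hw_mem, ?_⟩
  filter_upwards [Measure.ae_snd_mem_prod_restrict ν measurableSet_Ioo] with p hp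
  simp only [w, hp, if_true]

theorem prod_volume_restrict_setOf_le {G : α → ℝ → ℝ} (hG_meas : ∀ y, Measurable fun x => G x y)
    (hG_mem : ∀ x y, G x y ∈ Icc 0 1) (ν : Measure α) [SFinite ν] {A : Set α}
    (hA : MeasurableSet A) (y : ℝ) :
    ν.prod (volume.restrict (Ioo 0 1)) {p | p.1 ∈ A ∧ p.2 ≤ G p.1 y}
      = ∫⁻ x in A, ENNReal.ofReal (G x y) ∂ν := by
  have hmeas : MeasurableSet {p : α × ℝ | p.1 ∈ A ∧ p.2 ≤ G p.1 y} :=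
    (measurable_fst hA).inter (measurableSet_le measurable_snd ((hG_meas y).comp measurable_fst))
  rw [Measure.prod_apply hmeas, ← lintegral_indicator hA]
  refine lintegral_congr fun x => ?_
  by_cases hx : x ∈ A
  · simp only [preimage_ofPred_eq, hx, true_and, indicator_of_mem]
    exact volume_restrict_Ioo_zero_one_Iic (hG_mem x y)
  · simp [hx]

theorem map_prod_condQuantile_eq {G : α → ℝ → ℝ}
    (hG_meas : ∀ y, Measurable fun x => G x y) (hG_mono : ∀ x, Monotone (G x))
    (hG_rightCont : ∀ x y, ContinuousWithinAt (G x) (Ici y) y)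
    (hG_bot : ∀ x, Tendsto (G x) atBot (nhds 0)) (hG_top : ∀ x, Tendsto (G x) atTop (nhds 1))
    (ν : Measure α) [IsFiniteMeasure ν] (ρ : Measure (α × ℝ))
    (hG_cdf : ∀ A, MeasurableSet A → ∀ y, ρ (A ×ˢ Iic y) = ∫⁻ x in A, ENNReal.ofReal (G x y) ∂ν) :
    (ν.prod (volume.restrict (Ioo 0 1))).map (fun p => (p.1, condQuantile G p.1 p.2)) = ρ := by
  have hG_mem : ∀ x y, G x y ∈ Icc 0 1 := fun x y =>
    ⟨(hG_mono x).le_of_tendsto (hG_bot x) y, (hG_mono x).ge_of_tendsto (hG_top x) y⟩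
  have hΦ := aemeasurable_prod_condQuantile hG_meas hG_mono hG_rightCont hG_bot hG_top ν
  refine Measure.ext_prod_Iic fun A hA y => ?_
  rw [Measure.map_apply_of_aemeasurable hΦ (hA.prod measurableSet_Iic), hG_cdf A hA y,
    ← prod_volume_restrict_setOf_le hG_meas hG_mem ν hA y]
  refine measure_congr (eventuallyEq_set.2 ?_)
  filter_upwards [Measure.ae_snd_mem_prod_restrict ν measurableSet_Ioo] with p hp
  exact and_congr_right' (sInf_le_iff_le_of_rightContinuous (hG_mono _) (hG_rightCont _)
    (hG_bot _) (hG_top _) hp y)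

end CondQuantile

theorem stmt_18_general {Ω : Type*} [MeasurableSpace Ω] {μ : Measure Ω} [IsProbabilityMeasure μ]
    {d : ℕ} (ρ : Measure ((Fin d → ℝ) × ℝ)) [IsProbabilityMeasure ρ]
    {X : Ω → (Fin d → ℝ)} {U : Ω → ℝ}
    (hX : Measurable X) (hU : Measurable U)
    (hXlaw : Measure.map X μ = ρ.fst)
    (hUlaw : Measure.map U μ = volume.restrict (Set.Ioo (0 : ℝ) 1))
    (h_indep : IndepFun X U μ)
    {G : (Fin d → ℝ) → ℝ → ℝ}
    (hG_meas : ∀ y, Measurable fun x => G x y)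
    (hG_mono : ∀ x, Monotone (G x))
    (hG_rightCont : ∀ x y, ContinuousWithinAt (G x) (Set.Ici y) y)
    (hG_bot : ∀ x, Tendsto (G x) atBot (nhds 0))
    (hG_top : ∀ x, Tendsto (G x) atTop (nhds 1))
    (hG_cdf : ∀ A : Set (Fin d → ℝ), MeasurableSet A → ∀ y : ℝ,
      ρ (A ×ˢ Set.Iic y) = ∫⁻ x in A, ENNReal.ofReal (G x y) ∂ρ.fst)
    {g : (Fin d → ℝ) → ℝ → ℝ}
    (hg : ∀ x u, g x u = sInf {y : ℝ | u ≤ G x y}) :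
    Measure.map (fun ω => (X ω, g (X ω) (U ω))) μ = ρ := by
  obtain rfl : g = condQuantile G := funext₂ hg
  have hpair : μ.map (fun ω => (X ω, U ω)) = ρ.fst.prod (volume.restrict (Ioo 0 1)) := by
    rw [← hXlaw, ← hUlaw]
    exact (indepFun_iff_map_prod_eq_prod_map_map hX.aemeasurable hU.aemeasurable).1 h_indep
  have hΦ := aemeasurable_prod_condQuantile hG_meas hG_mono hG_rightCont hG_bot hG_top ρ.fst
  rw [← hpair] at hΦ
  rw [← map_prod_condQuantile_eq hG_meas hG_mono hG_rightCont hG_bot hG_top ρ.fst ρ hG_cdf, ← hpair,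
    hΦ.map_map_of_aemeasurable (hX.prodMk hU).aemeasurable]
  rfl

/-- Let `ρ` be the joint law of `(X,Y)` on `ℝ^d × ℝ`, let `X` have law the first marginal
of `ρ`, and let `U` be uniform on `(0,1)` and independent of `X`. If `G` is a conditional
cumulative distribution function of the second coordinate given the first (measurable in
`x`, a right-continuous nondecreasing distribution function in `y`, with
`ρ(A × (−∞,y]) = ∫_A G(x,y) dμ(x)` for the first marginal `μ`), and
`g(x,u) = inf{y : G(x,y) ≥ u}`, then `(X, g(X,U))` has law `ρ`. -/
theorem stmt_18 {Ω : Type*} [MeasurableSpace Ω] {μ : Measure Ω} [IsProbabilityMeasure μ]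
    {d : ℕ} (ρ : Measure ((Fin d → ℝ) × ℝ)) [IsProbabilityMeasure ρ]
    {X : Ω → (Fin d → ℝ)} {U : Ω → ℝ}
    (hX : Measurable X) (hU : Measurable U)
    (hXlaw : Measure.map X μ = ρ.fst)
    (hUlaw : Measure.map U μ = volume.restrict (Set.Ioo (0 : ℝ) 1))
    (h_indep : IndepFun X U μ)
    {G : (Fin d → ℝ) → ℝ → ℝ}
    (hG_meas : ∀ y, Measurable fun x => G x y)
    (hG_mem : ∀ x y, G x y ∈ Set.Icc (0 : ℝ) 1)
    (hG_mono : ∀ x, Monotone (G x))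
    (hG_rightCont : ∀ x y, ContinuousWithinAt (G x) (Set.Ici y) y)
    (hG_bot : ∀ x, Tendsto (G x) atBot (nhds 0))
    (hG_top : ∀ x, Tendsto (G x) atTop (nhds 1))
    (hG_cdf : ∀ A : Set (Fin d → ℝ), MeasurableSet A → ∀ y : ℝ,
      ρ (A ×ˢ Set.Iic y) = ∫⁻ x in A, ENNReal.ofReal (G x y) ∂ρ.fst)
    {g : (Fin d → ℝ) → ℝ → ℝ}
    (hg : ∀ x u, g x u = sInf {y : ℝ | u ≤ G x y}) :
    Measure.map (fun ω => (X ω, g (X ω) (U ω))) μ = ρ :=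
  stmt_18_general ρ hX hU hXlaw hUlaw h_indep hG_meas hG_mono hG_rightCont hG_bot hG_top hG_cdf hg
end
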